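/- If G is a traceable graph (a graph containing a Hamiltonian path) that is not complete, then tpc(G) = 3. -/

import Mathlib

/-- Interleave two lists, starting with the first. -/
def List.interleaveTPC {α : Type*} : List α → List α → List α
  | [], ys => ys
  | x :: xs, ys => x :: List.interleaveTPC ys xs
termination_by xs ys => xs.length + ys.length

namespace SimpleGraph

variable {V : Type*} {α : Type*} {G : SimpleGraph V}

/-- The sequence of colors `cE e₀, cV v₁, cE e₁, cV v₂, …, cE e_{m-1}` of the edges and
internal vertices of a walk, in order. -/
def Walk.totalColorSeq (cV : V → α) (cE : Sym2 V → α) {u v : V} (p : G.Walk u v) : List α :=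
  (p.edges.map cE).interleaveTPC (p.support.tail.dropLast.map cV)

/-- A walk is total-proper if in its color sequence, any two entries at distance 1 or 2
are distinct.  This says exactly that adjacent edges get distinct colors, adjacent internal
vertices get distinct colors, and every internal vertex gets a color distinct from those of
its incident edges on the walk. -/
def Walk.IsTotalProper (cV : V → α) (cE : Sym2 V → α) {u v : V} (p : G.Walk u v) : Prop :=
  ∀ i a b, (p.totalColorSeq cV cE)[i]? = some a →
    ((p.totalColorSeq cV cE)[i + 1]? = some b ∨ (p.totalColorSeq cV cE)[i + 2]? = some b) →
    a ≠ b

/-- A total coloring (given by a vertex coloring `cV` and an edge coloring `cE`) makes `G`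
total-proper connected if every two distinct vertices are joined by a total-proper path. -/
def IsTPCColoring (G : SimpleGraph V) (cV : V → α) (cE : Sym2 V → α) : Prop :=
  ∀ u v : V, u ≠ v → ∃ p : G.Walk u v, p.IsPath ∧ p.IsTotalProper cV cE

/-- The total-proper connection number: the minimum number of colors in a total coloring
making `G` total-proper connected. -/
noncomputable def tpc (G : SimpleGraph V) : ℕ :=
  sInf {k | ∃ (cV : V → Fin k) (cE : Sym2 V → Fin k), G.IsTPCColoring cV cE}

end SimpleGraph


/-!
A total-proper path between two non-adjacent vertices has length at least two, and the first three
entries of its color sequence (edge, vertex, edge) must be pairwise distinct, so three colors are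
needed as soon as `G` is not complete.

Conversely, number the vertices of a Hamiltonian path `0, …, n` and color the `i`-th vertex by
`2i` and the edge between positions `i` and `i + 1` by `2i + 1`, both in `ZMod 3`. Between any two
vertices, the segment of the Hamiltonian path joining them, traversed in either direction, has an
arithmetic progression with difference `±1` as its color sequence, and in `ZMod 3` two entries
of such a progression at distance `1` or `2` are distinct.
-/

namespace List

variable {α β : Type*}

@[simp]
lemma interleaveTPC_nil_left (ys : List α) : interleaveTPC [] ys = ys := by
  rw [interleaveTPC]

lemma interleaveTPC_cons_left (x : α) (xs ys : List α) :
    interleaveTPC (x :: xs) ys = x :: interleaveTPC ys xs := by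
  rw [interleaveTPC]

lemma map_interleaveTPC (f : α → β) (xs ys : List α) :
    (interleaveTPC xs ys).map f = interleaveTPC (xs.map f) (ys.map f) := by
  induction xs generalizing ys with
  | nil => simp
  | cons x xs ih =>
    cases ys with
    | nil => simp [interleaveTPC_cons_left]
    | cons y ys => simp [interleaveTPC_cons_left, ih]

end List

namespace SimpleGraph

variable {V α β : Type*} {G : SimpleGraph V}

namespace Walk

variable (cV : V → α) (cE : Sym2 V → α)

lemma totalColorSeq_cons_nil {u v : V} (h : G.Adj u v) :
    (cons h nil).totalColorSeq cV cE = [cE s(u, v)] := by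
  simp [totalColorSeq, List.interleaveTPC_cons_left]

lemma totalColorSeq_cons {u v w : V} (h : G.Adj u v) (q : G.Walk v w) (hq : ¬q.Nil) :
    (cons h q).totalColorSeq cV cE = cE s(u, v) :: cV v :: q.totalColorSeq cV cE := by
  obtain ⟨x, hx, q, rfl⟩ := not_nil_iff.mp hq
  simp [totalColorSeq, List.interleaveTPC_cons_left, List.dropLast_cons_of_ne_nil]

lemma totalColorSeq_comp (f : α → β) {u v : V} (q : G.Walk u v) :
    q.totalColorSeq (f ∘ cV) (f ∘ cE) = (q.totalColorSeq cV cE).map f := by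
  simp [totalColorSeq, List.map_interleaveTPC]

lemma head?_totalColorSeq_cons {u v w : V} (h : G.Adj u v) (q : G.Walk v w) :
    ((cons h q).totalColorSeq cV cE).head? = some (cE s(u, v)) := by
  simp [totalColorSeq, List.interleaveTPC_cons_left]

variable {cV cE}

lemma IsTotalProper.comp {f : α → β} (hf : f.Injective) {u v : V} {q : G.Walk u v}
    (h : q.IsTotalProper cV cE) : q.IsTotalProper (f ∘ cV) (f ∘ cE) := by
  intro i a b ha hb
  simp only [totalColorSeq_comp, List.getElem?_map, Option.map_eq_some_iff] at ha hb
  obtain ⟨a, ha, rfl⟩ := ha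
  rcases hb with ⟨b, hb, rfl⟩ | ⟨b, hb, rfl⟩
  · exact hf.ne (h i a b ha (Or.inl hb))
  · exact hf.ne (h i a b ha (Or.inr hb))

lemma IsTotalProper.three_le_card [Fintype α] {u v : V} {q : G.Walk u v}
    (h : q.IsTotalProper cV cE) (hq : 2 ≤ q.length) : 3 ≤ Fintype.card α := by
  obtain ⟨x, y, hux, hxy, r, rfl⟩ :
      ∃ x y, ∃ (hux : G.Adj u x) (hxy : G.Adj x y) (r : G.Walk y v), q = cons hux (cons hxy r) := by
    rcases q with _ | ⟨hux, _ | ⟨hxy, r⟩⟩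
    · simp at hq
    · simp at hq
    · exact ⟨_, _, hux, hxy, r, rfl⟩
  obtain ⟨l, hl⟩ := List.head?_eq_some_iff.mp (head?_totalColorSeq_cons cV cE hxy r)
  have hseq : (cons hux (cons hxy r)).totalColorSeq cV cE =
      cE s(u, x) :: cV x :: cE s(x, y) :: l := by
    rw [totalColorSeq_cons _ _ _ _ not_nil_cons, hl]
  rw [IsTotalProper, hseq] at h
  have h01 := h 0 _ _ rfl (Or.inl rfl)
  have h02 := h 0 _ _ rfl (Or.inr rfl)
  have h12 := h 1 _ _ rfl (Or.inl rfl)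
  classical
  calc 3 = ({cE s(u, x), cV x, cE s(x, y)} : Finset α).card :=
        (Finset.card_eq_three.mpr ⟨_, _, _, h01, h02, h12, rfl⟩).symm
    _ ≤ Fintype.card α := Finset.card_le_univ _

lemma isTotalProper_of_getElem?_eq [CommRing α] {u v : V} {q : G.Walk u v} {c ε : α}
    (hε : ε ≠ 0) (hε₂ : 2 * ε ≠ 0)
    (h : ∀ (t : ℕ) x, (q.totalColorSeq cV cE)[t]? = some x → x = c + t * ε) :
    q.IsTotalProper cV cE := by
  rintro i a b ha hb rfl
  have hi := h i a ha
  rcases hb with hb | hb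
  · have hi₁ := h (i + 1) a hb
    push_cast at hi₁
    exact hε (by linear_combination hi - hi₁)
  · have hi₂ := h (i + 2) a hb
    push_cast at hi₂
    exact hε₂ (by linear_combination hi - hi₂)

end Walk

section edgeSum

variable {R : Type*} [CommRing R] (f : V → R)

def edgeSum : Sym2 V → R :=
  Sym2.lift ⟨fun x y => f x + f y, fun _ _ => add_comm _ _⟩

@[simp]
lemma edgeSum_mk (x y : V) : edgeSum f s(x, y) = f x + f y := rfl

variable {f}

lemma Walk.getElem?_totalColorSeq_edgeSum {ε : R} {a b : V} (q : G.Walk a b)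
    (hq : ∀ d ∈ q.darts, f d.snd = f d.fst + ε) {t : ℕ} {x : R}
    (hx : (q.totalColorSeq (fun w => 2 * f w) (edgeSum f))[t]? = some x) :
    x = 2 * f a + (t + 1) * ε := by
  induction q generalizing t with
  | nil => simp [totalColorSeq] at hx
  | @cons u v w h r ih =>
    have huv : f v = f u + ε := hq _ List.mem_cons_self
    cases r with
    | nil =>
      rw [totalColorSeq_cons_nil] at hx
      cases t with
      | zero =>
        obtain rfl : f u + f v = x := by simpa using hx
        linear_combination huv
      | succ t => simp at hx
    | cons h' r =>
      rw [totalColorSeq_cons _ _ _ _ not_nil_cons] at hx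
      rcases t with _ | _ | t
      · obtain rfl : f u + f v = x := by simpa using hx
        linear_combination huv
      · obtain rfl : 2 * f v = x := by simpa using hx
        linear_combination 2 * huv
      · have := ih (fun d hd => hq d (List.mem_cons_of_mem _ hd)) (t := t) (by simpa using hx)
        push_cast
        linear_combination this + 2 * huv

lemma Walk.isTotalProper_edgeSum {ε : R} (hε : ε ≠ 0) (hε₂ : 2 * ε ≠ 0) {a b : V}
    (q : G.Walk a b) (hq : ∀ d ∈ q.darts, f d.snd = f d.fst + ε) :
    q.IsTotalProper (fun w => 2 * f w) (edgeSum f) :=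
  isTotalProper_of_getElem?_eq (c := 2 * f a + ε) hε hε₂ fun t x hx => by
    rw [q.getElem?_totalColorSeq_edgeSum hq hx]
    ring

end edgeSum

namespace Walk

variable [DecidableEq V]

lemma IsPath.idxOf_snd_of_mem_darts {u v : V} {p : G.Walk u v} (hp : p.IsPath) {d : G.Dart}
    (hd : d ∈ p.darts) : p.support.idxOf d.snd = p.support.idxOf d.fst + 1 := by
  induction p with
  | nil => simp at hd
  | @cons u v w h q ih =>
    rw [cons_isPath_iff] at hp
    rw [darts_cons, List.mem_cons] at hd
    rcases hd with rfl | hd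
    · have hvu : v ≠ u := fun hvu => hp.2 (hvu ▸ q.start_mem_support)
      rw [support_cons, List.idxOf_cons_self, List.idxOf_cons_ne _ hvu.symm, ← cons_tail_support,
        List.idxOf_cons_self]
    · have hfst : d.fst ≠ u := fun h => hp.2 (h ▸ q.dart_fst_mem_support_of_mem_darts hd)
      have hsnd : d.snd ≠ u := fun h => hp.2 (h ▸ q.dart_snd_mem_support_of_mem_darts hd)
      rw [support_cons, List.idxOf_cons_ne _ hfst.symm, List.idxOf_cons_ne _ hsnd.symm,
        ih hp.1 hd]

lemma IsPath.exists_isPath_darts_subset {u v : V} {p : G.Walk u v} (hp : p.IsPath) {a b : V}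
    (ha : a ∈ p.support) (hb : b ∈ p.support) (hab : p.support.idxOf a ≤ p.support.idxOf b) :
    ∃ q : G.Walk a b, q.IsPath ∧ q.darts ⊆ p.darts := by
  set i := p.support.idxOf a
  set j := p.support.idxOf b
  have hend : (p.drop i).getVert (j - i) = b := by
    rw [drop_getVert, Nat.add_sub_cancel' hab, getVert_support_idxOf _ hb]
  refine ⟨((p.drop i).take (j - i)).copy (getVert_support_idxOf _ ha) hend, ?_, ?_⟩
  · rw [isPath_copy]
    exact (hp.drop i).take _
  · rw [darts_copy, darts_take, darts_drop]
    exact fun d hd => List.mem_of_mem_drop (List.mem_of_mem_take hd)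

end Walk

section IsTPCColoring

variable {cV : V → α} {cE : Sym2 V → α}

lemma IsTPCColoring.comp {f : α → β} (hf : f.Injective) (h : G.IsTPCColoring cV cE) :
    G.IsTPCColoring (f ∘ cV) (f ∘ cE) := fun u v huv =>
  let ⟨p, hp, hpt⟩ := h u v huv
  ⟨p, hp, hpt.comp hf⟩

lemma IsTPCColoring.tpc_le_card [Fintype α] (h : G.IsTPCColoring cV cE) :
    G.tpc ≤ Fintype.card α :=
  Nat.sInf_le ⟨_, _, h.comp (Fintype.equivFin α).injective⟩

lemma IsTPCColoring.three_le_card [Fintype α] (hG : G ≠ ⊤) (h : G.IsTPCColoring cV cE) :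
    3 ≤ Fintype.card α := by
  obtain ⟨a, b, hab, hnadj⟩ := ne_top_iff_exists_not_adj.mp hG
  obtain ⟨q, -, hq⟩ := h a b hab
  refine hq.three_le_card ?_
  by_contra! hshort
  interval_cases hlen : q.length
  · exact hab (Walk.eq_of_length_eq_zero hlen)
  · exact hnadj (Walk.adj_of_length_eq_one hlen)

lemma three_le_tpc (hG : G ≠ ⊤)
    (h : ∃ k, ∃ (cV : V → Fin k) (cE : Sym2 V → Fin k), G.IsTPCColoring cV cE) :
    3 ≤ G.tpc := by
  obtain ⟨cV, cE, hc⟩ := Nat.sInf_mem h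
  have := hc.three_le_card hG
  rwa [Fintype.card_fin] at this

end IsTPCColoring

lemma Walk.IsHamiltonian.isTPCColoring [DecidableEq V] {u v : V} {p : G.Walk u v}
    (hp : p.IsHamiltonian) :
    G.IsTPCColoring (fun w => 2 * (p.support.idxOf w : ZMod 3))
      (edgeSum fun w => (p.support.idxOf w : ZMod 3)) := by
  intro a b _
  rcases le_total (p.support.idxOf a) (p.support.idxOf b) with hab | hba
  · obtain ⟨q, hq, hsub⟩ := hp.isPath.exists_isPath_darts_subset (hp.mem_support a)
      (hp.mem_support b) hab
    refine ⟨q, hq, q.isTotalProper_edgeSum (ε := 1) (by decide) (by decide) fun d hd => ?_⟩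
    simp [hp.isPath.idxOf_snd_of_mem_darts (hsub hd)]
  · obtain ⟨q, hq, hsub⟩ := hp.isPath.exists_isPath_darts_subset (hp.mem_support b)
      (hp.mem_support a) hba
    refine ⟨q.reverse, hq.reverse,
      q.reverse.isTotalProper_edgeSum (ε := -1) (by decide) (by decide) fun d hd => ?_⟩
    rw [mem_darts_reverse] at hd
    have hdesc : p.support.idxOf d.fst = p.support.idxOf d.snd + 1 :=
      hp.isPath.idxOf_snd_of_mem_darts (hsub hd)
    simp [hdesc]

end SimpleGraph

open SimpleGraph in
theorem tpc_traceable {V : Type*} [DecidableEq V] (G : SimpleGraph V)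
    (htr : ∃ (u v : V) (p : G.Walk u v), p.IsHamiltonian) (hnc : G ≠ ⊤) :
    G.tpc = 3 := by
  obtain ⟨u, v, p, hp⟩ := htr
  have hcol := hp.isTPCColoring
  exact le_antisymm (by simpa using hcol.tpc_le_card)
    (three_le_tpc hnc ⟨_, _, _, hcol.comp (Fintype.equivFin _).injective⟩)
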